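/- arXiv:1204.5258 — 2 statements merged into one kernel-verified Lean document; each statement's English description precedes it below -/
import Mathlib

section
/- Let Γ be a finite directed graph in which any two distinct cycles have no common vertex. Then every path p in Γ can be written as a concatenation p = p₁′ p₁ p₂′ p₂ ⋯ p_k p_{k+1}′, where C₁ ⟹ C₂ ⟹ ⋯ ⟹ C_k is a chain of cycles (possibly k = 0), each p_i is a (possibly empty) path all of whose edges belong to the cycle C_i, and each p_i′ is a (possibly empty) path all of whose edges belong to no cycle of Γ. -/
open scoped BigOperators

section LeavittSetup

variable {V E : Type}

/-- Generators of the Leavitt path algebra of a graph: vertices, edges, and ghost (star) edges. -/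
inductive LGen (V E : Type) : Type
  | vert : V → LGen V E
  | edge : E → LGen V E
  | star : E → LGen V E

variable (F : Type) [Field F]

/-- The vertex generator inside the free algebra. -/
noncomputable def gvert (v : V) : FreeAlgebra F (LGen V E) := FreeAlgebra.ι F (LGen.vert v)

/-- The edge generator inside the free algebra. -/
noncomputable def gedge (e : E) : FreeAlgebra F (LGen V E) := FreeAlgebra.ι F (LGen.edge e)

/-- The ghost edge generator `e*` inside the free algebra. -/
noncomputable def gstar (e : E) : FreeAlgebra F (LGen V E) := FreeAlgebra.ι F (LGen.star e)

variable (s r : E → V)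

/-- The defining relations of the Leavitt path algebra of the graph `(V, E, s, r)`:
(1) `v * w = δ_{v,w} v`; (2) `s(e) e = e = e r(e)` and `r(e) e* = e* = e* s(e)`;
(3) `e* f = δ_{e,f} r(e)`; (4) `v = ∑_{s(e) = v} e e*` for every non-sink `v`
(the sum makes sense whenever `v` emits finitely many edges, in particular for a
row-finite graph). -/
inductive LeavittRel : FreeAlgebra F (LGen V E) → FreeAlgebra F (LGen V E) → Prop
  | vertSelf (v : V) : LeavittRel (gvert F v * gvert F v) (gvert F v)
  | vertNe {v w : V} (h : v ≠ w) : LeavittRel (gvert F v * gvert F w) 0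
  | edgeSource (e : E) : LeavittRel (gvert F (s e) * gedge F e) (gedge F e)
  | edgeRange (e : E) : LeavittRel (gedge F e * gvert F (r e)) (gedge F e)
  | starRange (e : E) : LeavittRel (gvert F (r e) * gstar F e) (gstar F e)
  | starSource (e : E) : LeavittRel (gstar F e * gvert F (s e)) (gstar F e)
  | starEdgeSelf (e : E) : LeavittRel (gstar F e * gedge F e) (gvert F (r e))
  | starEdgeNe {e f : E} (h : e ≠ f) : LeavittRel (gstar F e * gedge F f) 0
  | ck (v : V) (h : {e : E | s e = v}.Finite) (hne : ∃ e, s e = v) :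
      LeavittRel (gvert F v) (∑ e ∈ h.toFinset, gedge F e * gstar F e)

/-- The Leavitt path algebra `L(Γ)` of the graph `Γ = (V, E, s, r)` over the field `F`,
presented as the quotient of the free algebra on the generators by the Leavitt relations. -/
noncomputable abbrev LeavittPathAlgebra := RingQuot (LeavittRel F s r)

/-- The image of a vertex in the Leavitt path algebra. -/
noncomputable def lvert (v : V) : LeavittPathAlgebra F s r :=
  RingQuot.mkAlgHom F (LeavittRel F s r) (gvert F v)

/-- The image of an edge in the Leavitt path algebra. -/
noncomputable def ledge (e : E) : LeavittPathAlgebra F s r :=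
  RingQuot.mkAlgHom F (LeavittRel F s r) (gedge F e)

/-- The image of a ghost edge `e*` in the Leavitt path algebra. -/
noncomputable def lstar (e : E) : LeavittPathAlgebra F s r :=
  RingQuot.mkAlgHom F (LeavittRel F s r) (gstar F e)

/-- The element of the Leavitt path algebra given by a path `p = e₁ ⋯ eₙ` (a list of edges). -/
noncomputable def lpath (p : List E) : LeavittPathAlgebra F s r := (p.map (ledge F s r)).prod

/-- The element `p* = eₙ* ⋯ e₁*` of the Leavitt path algebra given by a path `p = e₁ ⋯ eₙ`. -/
noncomputable def lpathStar (p : List E) : LeavittPathAlgebra F s r :=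
  (p.reverse.map (lstar F s r)).prod

/-- A list of edges is a path when the range of each edge is the source of the next. -/
def IsPath (s r : E → V) (p : List E) : Prop := List.Chain' (fun e f => r e = s f) p

/-- A nonempty path starts at the source of its first edge. -/
def StartsAt (s : E → V) (p : List E) (v : V) : Prop := ∃ e, p.head? = some e ∧ s e = v

/-- A nonempty path ends at the range of its last edge. -/
def EndsAt (r : E → V) (p : List E) (v : V) : Prop := ∃ e, p.getLast? = some e ∧ r e = v

/-- A (nonempty) closed path: it starts and ends at the same vertex. -/
def IsClosedPath (s r : E → V) (p : List E) : Prop := ∃ v, StartsAt s p v ∧ EndsAt r p v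

/-- A cycle: a closed path whose source vertices are pairwise distinct.  A cycle is
identified with the subgraph it spans, i.e. with its set of edges `{e | e ∈ p}`. -/
def IsCycle (s r : E → V) (p : List E) : Prop :=
  IsPath s r p ∧ IsClosedPath s r p ∧ (p.map s).Nodup

/-- The vertex set `V(C)` of a cycle (the sources of its edges). -/
def cycleVerts (s : E → V) (c : List E) : Set V := {v | ∃ e ∈ c, s e = v}

/-- `C ⟹ C'`: some (possibly empty) path starts at a vertex of `C` and ends at a
vertex of `C'`. -/
def CycleConnects (s r : E → V) (c c' : List E) : Prop :=
  ∃ v w, v ∈ cycleVerts s c ∧ w ∈ cycleVerts s c' ∧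
    (v = w ∨ ∃ p, p ≠ [] ∧ IsPath s r p ∧ StartsAt s p v ∧ EndsAt r p w)

/-- A chain of cycles `C₁ ⟹ C₂ ⟹ ⋯ ⟹ C_k`: pairwise distinct cycles, each connected
to the next; its length is the number of cycles. -/
def IsChainOfCycles (s r : E → V) (cs : List (List E)) : Prop :=
  (∀ c ∈ cs, IsCycle s r c) ∧ List.Chain' (CycleConnects s r) cs ∧
    List.Pairwise (fun c c' => {e | e ∈ c} ≠ {e | e ∈ c'}) cs

/-- A cycle has an exit if some edge starts at a vertex of the cycle but is not an
edge of the cycle. -/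
def HasExit (s : E → V) (c : List E) : Prop := ∃ e, s e ∈ cycleVerts s c ∧ e ∉ c

/-- A chain of cycles with an exit: the last cycle of the chain has an exit. -/
def ChainWithExit (s r : E → V) (cs : List (List E)) : Prop :=
  IsChainOfCycles s r cs ∧ ∃ c, cs.getLast? = some c ∧ HasExit s c

/-- Any two distinct cycles of the graph have no common vertex: two cycles sharing a
vertex coincide (have the same edge set). -/
def SeparatedCycles (s r : E → V) : Prop :=
  ∀ c c', IsCycle s r c → IsCycle s r c' →
    (cycleVerts s c ∩ cycleVerts s c').Nonempty → {e | e ∈ c} = {e | e ∈ c'}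

/-- `W + W² + ⋯ + Wⁿ` for a subspace `W` of an `F`-algebra. -/
noncomputable def powsSum {A : Type} [Semiring A] [Algebra F A]
    (W : Submodule F A) (n : ℕ) : Submodule F A :=
  ∑ i ∈ Finset.Icc 1 n, W ^ i

/-! Cut `p` greedily: a maximal prefix of edges lying on no cycle, then a maximal run of edges
of the cycle `C` carrying the next edge, and recurse on the remainder. The remainder starts at a
vertex of `C` and meets every later cycle `C'`, which gives `C ⟹ C'`. Moreover `C' ≠ C`:
otherwise the first edge `f` after the run would close up through `C` into a closed walk, hence
lie on a cycle; that cycle shares the vertex `s f` with `C`, so it is `C` by separation,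
contradicting the maximality of the run. -/

def IsWalk (s r : E → V) : V → List E → V → Prop
  | v, [], w => v = w
  | v, e :: p, w => s e = v ∧ IsWalk s r (r e) p w

def IsCycleDecomposition (s r : E → V) (p : List E) (cs ps ps' : List (List E)) : Prop :=
  IsChainOfCycles s r cs ∧ ps.length = cs.length ∧ ps'.length = cs.length + 1 ∧
    (∀ pc ∈ List.zip ps cs, IsPath s r pc.1 ∧ ∀ e ∈ pc.1, e ∈ pc.2) ∧
    (∀ q ∈ ps', IsPath s r q ∧ ∀ e ∈ q, ∀ c : List E, IsCycle s r c → e ∉ c) ∧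
    p = (List.zipWith (· ++ ·) ps' (ps ++ [[]])).flatten

theorem List.exists_eq_append_maximal_prefix {α : Type*} (l : List α) (P : α → Prop) :
    ∃ l₁ l₂, l = l₁ ++ l₂ ∧ (∀ x ∈ l₁, P x) ∧ ∀ x ∈ l₂.head?, ¬ P x := by
  classical
  refine ⟨l.takeWhile (P ·), l.dropWhile (P ·), List.takeWhile_append_dropWhile.symm,
    fun x hx => by simpa using List.mem_takeWhile_imp hx, fun x hx => ?_⟩
  have := List.head?_dropWhile_not (P ·) l
  rw [Option.mem_def.mp hx] at this
  simpa using this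

theorem List.exists_eq_append_of_not_nodup_map {α β : Type*} {f : α → β} {l : List α}
    (h : ¬ (l.map f).Nodup) : ∃ l₁ a l₂ b l₃, l = l₁ ++ a :: l₂ ++ b :: l₃ ∧ f a = f b := by
  induction l with
  | nil => simp at h
  | cons x l ih =>
    rw [List.map_cons, List.nodup_cons, not_and_or, not_not] at h
    rcases h with hx | hl
    · obtain ⟨y, hy, hxy⟩ := List.mem_map.mp hx
      obtain ⟨l₂, l₃, rfl⟩ := List.append_of_mem hy
      exact ⟨[], x, l₂, y, l₃, rfl, hxy.symm⟩
    · obtain ⟨l₁, a, l₂, b, l₃, rfl, hab⟩ := ih hl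
      exact ⟨x :: l₁, a, l₂, b, l₃, rfl, hab⟩

section Walks

variable {s r} {v w : V} {e : E} {p q : List E}

@[simp]
theorem isWalk_nil : IsWalk s r v [] w ↔ v = w := Iff.rfl

@[simp]
theorem isWalk_cons : IsWalk s r v (e :: p) w ↔ s e = v ∧ IsWalk s r (r e) p w := Iff.rfl

theorem isWalk_append : IsWalk s r v (p ++ q) w ↔ ∃ u, IsWalk s r v p u ∧ IsWalk s r u q w := by
  induction p generalizing v with
  | nil => simp
  | cons e p ih => simp [ih, and_assoc]

theorem isWalk_append_cons :
    IsWalk s r v (p ++ e :: q) w ↔ IsWalk s r v p (s e) ∧ IsWalk s r (s e) (e :: q) w := by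
  simp [isWalk_append]

theorem isPath_singleton : IsPath s r [e] := List.isChain_singleton e

theorem isPath_cons_cons {f : E} : IsPath s r (e :: f :: p) ↔ r e = s f ∧ IsPath s r (f :: p) :=
  List.isChain_cons_cons

theorem isWalk_cons_iff :
    IsWalk s r v (e :: p) w ↔ IsPath s r (e :: p) ∧ s e = v ∧ EndsAt r (e :: p) w := by
  induction p generalizing e v with
  | nil => simp [isPath_singleton, EndsAt]
  | cons f p ih =>
    simp only [isWalk_cons, ih, isPath_cons_cons, EndsAt,
      List.getLast?_cons_cons, eq_comm (a := s f)]
    tauto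

theorem IsPath.exists_isWalk (h : IsPath s r (e :: p)) : ∃ w, IsWalk s r (s e) (e :: p) w :=
  ⟨_, isWalk_cons_iff.mpr ⟨h, rfl, _, List.getLast?_eq_some_getLast (List.cons_ne_nil e p), rfl⟩⟩

theorem isCycle_iff {c : List E} :
    IsCycle s r c ↔ c ≠ [] ∧ (∃ v, IsWalk s r v c v) ∧ (c.map s).Nodup := by
  cases c with
  | nil => simp [IsCycle, IsClosedPath, StartsAt]
  | cons e c =>
    simp [IsCycle, IsClosedPath, StartsAt, isWalk_cons_iff, -isWalk_cons, and_assoc]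

end Walks

section Cycles

variable {s r} {c : List E}

theorem cycleConnects_of_isWalk {c' q : List E} {v w : V} (hv : v ∈ cycleVerts s c)
    (hw : w ∈ cycleVerts s c') (hq : IsWalk s r v q w) : CycleConnects s r c c' := by
  refine ⟨v, w, hv, hw, ?_⟩
  cases q with
  | nil => exact Or.inl hq
  | cons e q =>
    obtain ⟨hpath, rfl, hend⟩ := isWalk_cons_iff.mp hq
    exact Or.inr ⟨e :: q, List.cons_ne_nil e q, hpath, ⟨e, rfl, rfl⟩, hend⟩

theorem IsCycle.range_mem_cycleVerts (hc : IsCycle s r c) {e : E} (he : e ∈ c) :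
    r e ∈ cycleVerts s c := by
  obtain ⟨hne, ⟨v, hv⟩, -⟩ := isCycle_iff.mp hc
  obtain ⟨x, t, rfl⟩ := List.exists_cons_of_ne_nil hne
  obtain ⟨a, b, hab⟩ := List.append_of_mem he
  have hb : IsWalk s r (r e) b v := by
    rw [hab] at hv
    exact (isWalk_cons.mp (isWalk_append_cons.mp hv).2).2
  cases b with
  | nil => exact ⟨x, List.mem_cons_self .., (isWalk_cons.mp hv).1.trans hb.symm⟩
  | cons f b => exact ⟨f, by simp [hab], (isWalk_cons.mp hb).1⟩

theorem IsCycle.target_mem_cycleVerts (hc : IsCycle s r c) {p : List E} (hp : p ≠ [])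
    (hpc : ∀ e ∈ p, e ∈ c) {v w : V} (hw : IsWalk s r v p w) : w ∈ cycleVerts s c := by
  obtain ⟨l, e, rfl⟩ := (List.eq_nil_or_concat p).resolve_left hp
  rw [List.concat_eq_append, isWalk_append_cons] at hw
  obtain ⟨-, -, rfl⟩ := hw.2
  exact hc.range_mem_cycleVerts (hpc e (by simp))

theorem IsCycle.exists_isWalk (hc : IsCycle s r c) {v w : V} (hv : v ∈ cycleVerts s c)
    (hw : w ∈ cycleVerts s c) : ∃ q, IsWalk s r v q w := by
  obtain ⟨-, ⟨u, hu⟩, -⟩ := isCycle_iff.mp hc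
  obtain ⟨e₁, he₁, rfl⟩ := hv
  obtain ⟨e₂, he₂, rfl⟩ := hw
  obtain ⟨a, b, rfl⟩ := List.append_of_mem he₁
  obtain ⟨ha, hb⟩ := isWalk_append_cons.mp hu
  -- rotate the closed walk so that it starts at `s e₁`
  have hrot : IsWalk s r (s e₁) ((e₁ :: b) ++ a) (s e₁) := isWalk_append.mpr ⟨u, hb, ha⟩
  obtain ⟨x, y, hxy⟩ := List.append_of_mem (show e₂ ∈ (e₁ :: b) ++ a by simp at he₂ ⊢; tauto)
  rw [hxy] at hrot
  exact ⟨x, (isWalk_append_cons.mp hrot).1⟩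

theorem exists_isCycle_mem_of_isWalk {v : V} {w : List E} (hw : IsWalk s r v w v) {f : E}
    (hf : f ∈ w) : ∃ c, IsCycle s r c ∧ f ∈ c := by
  by_cases hnd : (w.map s).Nodup
  · exact ⟨w, isCycle_iff.mpr ⟨List.ne_nil_of_mem hf, ⟨v, hw⟩, hnd⟩, hf⟩
  -- cutting at a repeated vertex `s g = s h` splits the closed walk into two shorter ones
  obtain ⟨l₁, g, l₂, h, l₃, rfl, hgh⟩ := List.exists_eq_append_of_not_nodup_map hnd
  obtain ⟨h₁₂, h₃⟩ := isWalk_append_cons.mp hw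
  obtain ⟨h₁, h₂⟩ := isWalk_append_cons.mp h₁₂
  rw [← hgh] at h₂ h₃
  have : f ∈ g :: l₂ ∨ f ∈ l₁ ++ h :: l₃ := by simp at hf ⊢; tauto
  rcases this with hf | hf
  · exact exists_isCycle_mem_of_isWalk h₂ hf
  · exact exists_isCycle_mem_of_isWalk (isWalk_append.mpr ⟨_, h₁, h₃⟩) hf
termination_by w.length
decreasing_by all_goals subst_vars; simp only [List.length_append, List.length_cons]; omega

end Cycles

section Decomposition

variable {s r} {c : List E} {cs ps ps' : List (List E)}

theorem SeparatedCycles.mem_of_isWalk (hsep : SeparatedCycles s r) (hc : IsCycle s r c)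
    {v w : V} (hv : v ∈ cycleVerts s c) (hw : w ∈ cycleVerts s c) {f : E} {q : List E}
    (hq : IsWalk s r v (f :: q) w) : f ∈ c := by
  obtain ⟨t, ht⟩ := hc.exists_isWalk hw hv
  obtain ⟨c', hc', hfc'⟩ :=
    exists_isCycle_mem_of_isWalk (isWalk_append.mpr ⟨w, hq, ht⟩) List.mem_cons_self
  have hsame := hsep c' c hc' hc ⟨v, ⟨f, hfc', (isWalk_cons.mp hq).1⟩, hv⟩
  exact (Set.ext_iff.mp hsame f).mp hfc'

theorem SeparatedCycles.cycleConnects_and_ne (hsep : SeparatedCycles s r) (hc : IsCycle s r c)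
    {p₁ rest : List E} (hp₁ : p₁ ≠ []) (hp₁c : ∀ e ∈ p₁, e ∈ c)
    (hrest : ∀ f ∈ rest.head?, f ∉ c) (hpath : IsPath s r (p₁ ++ rest)) {c' : List E}
    {g : E} (hg : g ∈ rest) (hgc' : g ∈ c') :
    CycleConnects s r c c' ∧ {e | e ∈ c} ≠ {e | e ∈ c'} := by
  obtain ⟨e, p₁', rfl⟩ := List.exists_cons_of_ne_nil hp₁
  obtain ⟨y, hwalk⟩ : ∃ y, IsWalk s r (s e) ((e :: p₁') ++ rest) y := hpath.exists_isWalk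
  obtain ⟨b, hp₁walk, hwalk⟩ := isWalk_append.mp hwalk
  have hb : b ∈ cycleVerts s c := hc.target_mem_cycleVerts hp₁ hp₁c hp₁walk
  obtain ⟨q, t, rfl⟩ := List.append_of_mem hg
  obtain ⟨hq, -⟩ := isWalk_append_cons.mp hwalk
  refine ⟨cycleConnects_of_isWalk hb ⟨g, hgc', rfl⟩ hq, fun hcc' => ?_⟩
  have hgc : g ∈ c := (Set.ext_iff.mp hcc' g).mpr hgc'
  cases q with
  | nil => exact hrest g rfl hgc
  | cons f q => exact hrest f rfl (hsep.mem_of_isWalk hc hb ⟨g, hgc, rfl⟩ hq)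

theorem IsChainOfCycles.cons (hcs : IsChainOfCycles s r cs) (hc : IsCycle s r c)
    (hconn : ∀ c' ∈ cs, CycleConnects s r c c') (hne : ∀ c' ∈ cs, {e | e ∈ c} ≠ {e | e ∈ c'}) :
    IsChainOfCycles s r (c :: cs) :=
  ⟨List.forall_mem_cons.mpr ⟨hc, hcs.1⟩,
    List.isChain_cons.mpr ⟨fun c' h => hconn c' (List.mem_of_mem_head? h), hcs.2.1⟩,
    List.pairwise_cons.mpr ⟨hne, hcs.2.2⟩⟩

theorem isCycleDecomposition_singleton {u : List E} (hu : IsPath s r u)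
    (hu' : ∀ e ∈ u, ∀ c : List E, IsCycle s r c → e ∉ c) :
    IsCycleDecomposition s r u [] [] [u] :=
  ⟨⟨by simp, List.isChain_nil, List.Pairwise.nil⟩, rfl, rfl, by simp, by simpa using ⟨hu, hu'⟩,
    by simp⟩

theorem IsCycleDecomposition.cons {p u p₁ : List E} (hdec : IsCycleDecomposition s r p cs ps ps')
    (hchain : IsChainOfCycles s r (c :: cs)) (hu : IsPath s r u)
    (hu' : ∀ e ∈ u, ∀ c : List E, IsCycle s r c → e ∉ c) (hp₁ : IsPath s r p₁)
    (hp₁c : ∀ e ∈ p₁, e ∈ c) :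
    IsCycleDecomposition s r (u ++ p₁ ++ p) (c :: cs) (p₁ :: ps) (u :: ps') := by
  obtain ⟨-, hlen, hlen', hps, hps', rfl⟩ := hdec
  refine ⟨hchain, by simp [hlen], by simp [hlen'], ?_, ?_, by simp⟩
  · rw [List.zip_cons_cons]
    exact List.forall_mem_cons.mpr ⟨⟨hp₁, hp₁c⟩, hps⟩
  · exact List.forall_mem_cons.mpr ⟨⟨hu, hu'⟩, hps'⟩

theorem SeparatedCycles.exists_isCycleDecomposition (hsep : SeparatedCycles s r) (p : List E)
    (hp : IsPath s r p) :
    ∃ cs ps ps', IsCycleDecomposition s r p cs ps ps' ∧ ∀ c ∈ cs, ∃ g ∈ p, g ∈ c := by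
  obtain ⟨u, v, rfl, hu, hv⟩ :=
    List.exists_eq_append_maximal_prefix p (fun e => ∀ c : List E, IsCycle s r c → e ∉ c)
  have hupath : IsPath s r u := hp.infix (List.prefix_append u v).isInfix
  cases v with
  | nil => exact ⟨[], [], [u], by simpa using isCycleDecomposition_singleton hupath hu, by simp⟩
  | cons e v =>
    obtain ⟨c, hc, hec⟩ : ∃ c, IsCycle s r c ∧ e ∈ c := by simpa using hv
    obtain ⟨p₁, rest, hsplit, hp₁c, hrest⟩ := List.exists_eq_append_maximal_prefix (e :: v) (· ∈ c)
    have hp₁ : p₁ ≠ [] := by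
      rintro rfl
      rw [List.nil_append] at hsplit
      exact hrest e (by simp [← hsplit]) hec
    have hpath : IsPath s r (p₁ ++ rest) := hsplit ▸ hp.infix (List.suffix_append u _).isInfix
    have hlen : rest.length < (u ++ e :: v).length := by
      have h₁ := congrArg List.length hsplit
      have h₂ := List.length_pos_of_ne_nil hp₁
      simp only [List.length_append, List.length_cons] at h₁ ⊢
      omega
    obtain ⟨cs, ps, ps', hdec, hmeet⟩ :=
      hsep.exists_isCycleDecomposition rest (hpath.infix (List.suffix_append p₁ rest).isInfix)
    have hlink (c') (hc' : c' ∈ cs) : CycleConnects s r c c' ∧ {e | e ∈ c} ≠ {e | e ∈ c'} := by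
      obtain ⟨g, hg, hgc'⟩ := hmeet c' hc'
      exact hsep.cycleConnects_and_ne hc hp₁ hp₁c hrest hpath hg hgc'
    refine ⟨c :: cs, p₁ :: ps, u :: ps', ?_, ?_⟩
    · rw [hsplit, ← List.append_assoc]
      exact hdec.cons (hdec.1.cons hc (fun c' h => (hlink c' h).1) fun c' h => (hlink c' h).2)
        hupath hu (hpath.infix (List.prefix_append p₁ rest).isInfix) hp₁c
    · refine List.forall_mem_cons.mpr ⟨⟨e, by simp, hec⟩, fun c' h => ?_⟩
      obtain ⟨g, hg, hgc'⟩ := hmeet c' h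
      exact ⟨g, by simp [hsplit, hg], hgc'⟩
termination_by p.length

end Decomposition

theorem path_decomposition_along_chain
    (hsep : SeparatedCycles s r)
    (p : List E) (hp : IsPath s r p) :
    ∃ cs ps ps' : List (List E),
      IsChainOfCycles s r cs ∧
      ps.length = cs.length ∧
      ps'.length = cs.length + 1 ∧
      (∀ pc ∈ List.zip ps cs, IsPath s r pc.1 ∧ ∀ e ∈ pc.1, e ∈ pc.2) ∧
      (∀ q ∈ ps', IsPath s r q ∧ ∀ e ∈ q, ∀ c : List E, IsCycle s r c → e ∉ c) ∧
      p = (List.zipWith (· ++ ·) ps' (ps ++ [[]])).flatten := by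
  obtain ⟨cs, ps, ps', hdec, -⟩ := hsep.exists_isCycleDecomposition p hp
  exact ⟨cs, ps, ps', hdec⟩

end LeavittSetup
end

section
/- Let Γ be a directed graph containing two distinct cycles C₁ and C₂ with a common vertex v. Then the number of closed paths in Γ based at v of length at most n grows exponentially: there exist constants c > 1 and N such that for all n ≥ N the number of closed paths based at v of length ≤ n is at least cⁿ. -/
open scoped BigOperators

section LeavittSetup

variable {V E : Type}

variable (F : Type) [Field F]

variable (s r : E → V)

/-! Rotating each cycle to start at `v` gives two distinct closed paths `p₁`, `p₂` based at `v`.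
A cycle visits `v` only once, so no closed path based at `v` is a proper prefix of a cycle
rotated to `v`; hence neither of `p₁`, `p₂` is a prefix of the other, and the `2ᵏ` words of
length `k` in `p₁`, `p₂` spell pairwise distinct closed paths at `v` of length at most `k L`,
where `L = max |p₁| |p₂|`. With `k = n / L` this gives at least `2 ^ (n / L) ≥ (2 ^ (1 / 2L)) ^ n`
closed paths of length at most `n`. -/

theorem flatten_map_injective_of_not_prefix {ι α : Type*} {f : ι → List α}
    (hne : ∀ i, f i ≠ []) (hf : ∀ i j, i ≠ j → ¬ f i <+: f j) :
    Function.Injective fun w : List ι => (w.map f).flatten := by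
  intro w
  induction w with
  | nil =>
    rintro (_ | ⟨j, w'⟩) h
    · rfl
    · exact absurd (List.append_eq_nil_iff.mp h.symm).1 (hne j)
  | cons i w ih =>
    rintro (_ | ⟨j, w'⟩) h
    · exact absurd (List.append_eq_nil_iff.mp h).1 (hne i)
    · simp only [List.map_cons, List.flatten_cons] at h
      obtain rfl | hij := eq_or_ne i j
      · rw [ih (List.append_cancel_left h)]
      · have hj : f j <+: f i ++ (w.map f).flatten := h ▸ List.prefix_append _ _
        exact ((List.prefix_or_prefix_of_prefix (List.prefix_append _ _) hj).elim
          (hf i j hij) (hf j i hij.symm)).elim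

theorem le_two_mul_mul_div {L n : ℕ} (hL : 0 < L) (hLn : L ≤ n) : n ≤ 2 * L * (n / L) := by
  have := Nat.div_add_mod n L
  have := Nat.mod_lt n hL
  have : 1 ≤ n / L := (Nat.one_le_div_iff hL).mpr hLn
  nlinarith

theorem two_rpow_inv_pow_le_two_pow_div {L n : ℕ} (hL : 0 < L) (hLn : L ≤ n) :
    ((2 : ℝ) ^ ((2 * L : ℕ) : ℝ)⁻¹) ^ n ≤ 2 ^ (n / L) := by
  have hc : 1 ≤ (2 : ℝ) ^ ((2 * L : ℕ) : ℝ)⁻¹ := Real.one_le_rpow (by norm_num) (by positivity)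
  calc ((2 : ℝ) ^ ((2 * L : ℕ) : ℝ)⁻¹) ^ n
      ≤ ((2 : ℝ) ^ ((2 * L : ℕ) : ℝ)⁻¹) ^ (2 * L * (n / L)) :=
        pow_le_pow_right₀ hc (le_two_mul_mul_div hL hLn)
    _ = 2 ^ (n / L) := by rw [pow_mul, Real.rpow_inv_natCast_pow (by norm_num) (by omega)]

section ClosedPaths

variable {s r}

def IsClosedPathAt (s r : E → V) (v : V) (p : List E) : Prop :=
  IsPath s r p ∧ StartsAt s p v ∧ EndsAt r p v

theorem isPath_append {p q : List E} :
    IsPath s r (p ++ q) ↔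
      IsPath s r p ∧ IsPath s r q ∧ ∀ e ∈ p.getLast?, ∀ f ∈ q.head?, r e = s f :=
  List.isChain_append

theorem IsClosedPathAt.ne_nil {v : V} {p : List E} (hp : IsClosedPathAt s r v p) : p ≠ [] := by
  rintro rfl
  obtain ⟨_, ⟨_, h, _⟩, _⟩ := hp
  simp at h

theorem IsClosedPathAt.append {v : V} {p q : List E} (hp : IsClosedPathAt s r v p)
    (hq : IsClosedPathAt s r v q) : IsClosedPathAt s r v (p ++ q) := by
  obtain ⟨hpp, ⟨a, ha, hsa⟩, ⟨b, hb, hrb⟩⟩ := hp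
  obtain ⟨hqp, ⟨c, hc, hsc⟩, ⟨d, hd, hrd⟩⟩ := hq
  refine ⟨isPath_append.mpr ⟨hpp, hqp, ?_⟩, ⟨a, ?_, hsa⟩, ⟨d, ?_, hrd⟩⟩
  · intro e he f hf
    rw [hb, Option.mem_some_iff] at he
    rw [hc, Option.mem_some_iff] at hf
    rw [← he, ← hf, hrb, hsc]
  · rw [List.head?_append, ha]; rfl
  · rw [List.getLast?_append, hd]; rfl

theorem IsClosedPathAt.flatten {v : V} :
    ∀ {ps : List (List E)}, ps ≠ [] → (∀ p ∈ ps, IsClosedPathAt s r v p) →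
      IsClosedPathAt s r v ps.flatten
  | [], hne, _ => absurd rfl hne
  | [p], _, h => by simpa using h p (by simp)
  | p :: q :: ps, _, h => by
    rw [List.flatten_cons]
    exact (h p (by simp)).append
      (IsClosedPathAt.flatten (by simp) fun x hx => h x (List.mem_cons_of_mem _ hx))

theorem IsClosedPathAt.append_comm {w u : V} {a b : List E}
    (h : IsClosedPathAt s r w (a ++ b)) (ha : a ≠ []) (hb : StartsAt s b u) :
    IsClosedPathAt s r u (b ++ a) := by
  obtain ⟨hab, ⟨x, hx, hsx⟩, ⟨y, hy, hry⟩⟩ := h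
  obtain ⟨hpa, hpb, hlink⟩ := isPath_append.mp hab
  obtain ⟨z, hz, hsz⟩ := hb
  obtain ⟨l, hl⟩ := Option.isSome_iff_exists.mp (List.getLast?_isSome.mpr ha)
  rw [List.head?_append_of_ne_nil _ ha] at hx
  rw [List.getLast?_append_of_ne_nil _ (by rintro rfl; simp at hz)] at hy
  refine ⟨isPath_append.mpr ⟨hpb, hpa, ?_⟩, ⟨z, ?_, hsz⟩, ⟨l, ?_, ?_⟩⟩
  · intro e he f hf
    rw [hy, Option.mem_some_iff] at he
    rw [hx, Option.mem_some_iff] at hf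
    rw [← he, ← hf, hry, hsx]
  · rw [List.head?_append, hz]; rfl
  · rw [List.getLast?_append_of_ne_nil _ ha, hl]
  · rw [hlink l hl z hz, hsz]

theorem IsCycle.exists_isClosedPathAt_perm {c : List E} (hc : IsCycle s r c) {v : V}
    (hv : v ∈ cycleVerts s c) : ∃ p, IsClosedPathAt s r v p ∧ p.Perm c := by
  obtain ⟨e, he, rfl⟩ := hv
  obtain ⟨a, b, rfl⟩ := List.append_of_mem he
  obtain ⟨hpath, ⟨w, hstart, hend⟩, -⟩ := hc
  have hw : IsClosedPathAt s r w (a ++ e :: b) := ⟨hpath, hstart, hend⟩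
  rcases eq_or_ne a [] with rfl | ha
  · obtain ⟨x, hx, rfl⟩ := hstart
    obtain rfl : e = x := by simpa using hx
    exact ⟨_, hw, List.Perm.refl _⟩
  · exact ⟨_, hw.append_comm ha ⟨e, rfl, rfl⟩, List.perm_append_comm⟩

theorem IsClosedPathAt.not_prefix {v : V} {p q : List E} (hp : IsClosedPathAt s r v p)
    (hq : IsPath s r q) (hnd : (q.map s).Nodup) (hpq : p ≠ q) : ¬ p <+: q := by
  rintro ⟨t, rfl⟩
  obtain ⟨x, t, rfl⟩ := List.exists_cons_of_ne_nil (l := t) (by rintro rfl; simp at hpq)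
  obtain ⟨-, ⟨a, ha, rfl⟩, ⟨b, hb, hrb⟩⟩ := hp
  have hsx : s x = s a := by rw [← (isPath_append.mp hq).2.2 b hb x rfl, hrb]
  rw [List.map_append] at hnd
  exact List.disjoint_of_nodup_append hnd (List.mem_map_of_mem (List.mem_of_mem_head? ha))
    (hsx ▸ List.mem_map_of_mem List.mem_cons_self)

theorem exists_card_eq_two_pow_of_not_prefix {v : V} {p q : List E}
    (hp : IsClosedPathAt s r v p) (hq : IsClosedPathAt s r v q)
    (hpq : ¬ p <+: q) (hqp : ¬ q <+: p) {k : ℕ} (hk : k ≠ 0) :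
    ∃ S : Finset (List E), (∀ x ∈ S, IsClosedPathAt s r v x ∧
      x.length ≤ k * max p.length q.length) ∧ S.card = 2 ^ k := by
  let word : List Bool → List E := fun w => (w.map fun b => cond b p q).flatten
  have hword : Function.Injective word :=
    flatten_map_injective_of_not_prefix (by rintro (_ | _); exacts [hq.ne_nil, hp.ne_nil])
      (by rintro (_ | _) (_ | _) h <;> simp_all)
  refine ⟨(Finset.univ : Finset (Fin k → Bool)).map
    ⟨word ∘ List.ofFn, hword.comp List.ofFn_injective⟩, ?_, by simp⟩
  simp only [Finset.mem_map, Finset.mem_univ, true_and, Function.Embedding.coeFn_mk,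
    Function.comp_apply, forall_exists_index, forall_apply_eq_imp_iff]
  intro t
  have hletters : ∀ x ∈ (List.ofFn t).map fun b => cond b p q,
      IsClosedPathAt s r v x ∧ x.length ≤ max p.length q.length := by
    simp only [List.mem_map]
    rintro _ ⟨(_ | _), -, rfl⟩
    exacts [⟨hq, le_max_right _ _⟩, ⟨hp, le_max_left _ _⟩]
  refine ⟨.flatten (by simpa using hk) fun x hx => (hletters x hx).1, ?_⟩
  calc (word (List.ofFn t)).length
      = (((List.ofFn t).map fun b => cond b p q).map List.length).sum := List.length_flatten
    _ ≤ (((List.ofFn t).map fun b => cond b p q).map List.length).length •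
          max p.length q.length := by
        refine List.sum_le_card_nsmul _ _ fun n hn => ?_
        obtain ⟨x, hx, rfl⟩ := List.mem_map.mp hn
        exact (hletters x hx).2
    _ = k * max p.length q.length := by
        simp only [List.length_map, List.length_ofFn, smul_eq_mul]

end ClosedPaths

/-- If a graph contains two distinct cycles with a common vertex
`v`, then the number of closed paths based at `v` of length at most `n` grows
exponentially: for some `c > 1` and all large `n` there are at least `cⁿ` such
paths. -/
theorem closed_path_count_exponential_lower_bound
    (es₁ es₂ : List E) (h₁ : IsCycle s r es₁) (h₂ : IsCycle s r es₂)
    (hdistinct : {e | e ∈ es₁} ≠ {e | e ∈ es₂})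
    (v : V) (hv₁ : v ∈ cycleVerts s es₁) (hv₂ : v ∈ cycleVerts s es₂) :
    ∃ c : ℝ, 1 < c ∧ ∃ N : ℕ, ∀ n ≥ N,
      ∃ S : Finset (List E),
        (∀ p ∈ S, IsPath s r p ∧ StartsAt s p v ∧ EndsAt r p v ∧ p.length ≤ n) ∧
        c ^ n ≤ (S.card : ℝ) := by
  obtain ⟨p₁, hp₁, hperm₁⟩ := h₁.exists_isClosedPathAt_perm hv₁
  obtain ⟨p₂, hp₂, hperm₂⟩ := h₂.exists_isClosedPathAt_perm hv₂
  have hne : p₁ ≠ p₂ := by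
    rintro rfl
    exact hdistinct (Set.ext fun e => hperm₁.mem_iff.symm.trans hperm₂.mem_iff)
  have hnd₁ : (p₁.map s).Nodup := (hperm₁.map s).nodup_iff.mpr h₁.2.2
  have hnd₂ : (p₂.map s).Nodup := (hperm₂.map s).nodup_iff.mpr h₂.2.2
  set L := max p₁.length p₂.length
  have hL : 0 < L := lt_max_of_lt_left (List.length_pos_iff.mpr hp₁.ne_nil)
  refine ⟨2 ^ ((2 * L : ℕ) : ℝ)⁻¹, Real.one_lt_rpow (by norm_num) (by positivity), L,
    fun n hn => ?_⟩
  obtain ⟨S, hS, hcard⟩ := exists_card_eq_two_pow_of_not_prefix hp₁ hp₂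
    (hp₁.not_prefix hp₂.1 hnd₂ hne) (hp₂.not_prefix hp₁.1 hnd₁ hne.symm)
    (Nat.div_pos hn hL).ne'
  refine ⟨S, fun p hp => ?_, ?_⟩
  · obtain ⟨⟨hpath, hstart, hend⟩, hlen⟩ := hS p hp
    exact ⟨hpath, hstart, hend, hlen.trans (Nat.div_mul_le_self n L)⟩
  · rw [hcard, Nat.cast_pow, Nat.cast_ofNat]
    exact two_rpow_inv_pow_le_two_pow_div hL hn

end LeavittSetup
end
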